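/- Fix an integer d ≥ 2 and an integer k with 1 ≤ k ≤ d². There exist a POVM {M_i}_{i=1}^k on ℂ^d ⊗ ℂ^d and unitaries U_i on ℂ^d such that, with systems C, D, A, B each equal to ℂ^d, Σ_{i=1}^k tr[(ψ⁺_{CB} ⊗ I_{DA}) (I_C ⊗ M_i ⊗ U_i)(ψ⁺_{CD} ⊗ ψ⁺_{AB})(I_C ⊗ I_{DA} ⊗ U_i†)] = k/d². Concretely, one may take U_i to be generalized Pauli (Weyl) unitaries, M_i for i ≤ k−1 to be the transposed projectors onto the corresponding generalized Bell states (U_i† ⊗ I)ψ⁺(U_i ⊗ I), and M_k = I − Σ_{j=1}^{k−1} M_j. -/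

import Mathlib

open Matrix BigOperators ComplexOrder Kronecker

noncomputable section

/-- The maximally entangled state `|ψ⁺⟩ = (1/√n) Σᵢ |i⟩ ⊗ |i⟩` on `ℂ^n ⊗ ℂ^n`. -/
def mes (n : ℕ) : Fin n × Fin n → ℂ :=
  fun p => if p.1 = p.2 then ((1 / Real.sqrt n : ℝ) : ℂ) else 0

/-- The rank-one projector `ψ⁺ = |ψ⁺⟩⟨ψ⁺|` onto the maximally entangled state. -/
def mesProj (n : ℕ) : Matrix (Fin n × Fin n) (Fin n × Fin n) ℂ :=
  Matrix.of fun p q => mes n p * (starRingEnd ℂ) (mes n q)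

/-- Index type for the four systems, ordered as (C, D, A, B), each of dimension `n`. -/
abbrev I4 (n : ℕ) := Fin n × Fin n × Fin n × Fin n

/-- `ψ⁺_{CB} ⊗ I_{DA}` as an operator on C ⊗ D ⊗ A ⊗ B. -/
def psiCB (n : ℕ) : Matrix (I4 n) (I4 n) ℂ :=
  Matrix.of fun p q =>
    mesProj n (p.1, p.2.2.2) (q.1, q.2.2.2) *
      (if p.2.1 = q.2.1 ∧ p.2.2.1 = q.2.2.1 then 1 else 0)

/-- The initial state `ψ⁺_{CD} ⊗ ψ⁺_{AB}` as an operator on C ⊗ D ⊗ A ⊗ B. -/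
def psiInit (n : ℕ) : Matrix (I4 n) (I4 n) ℂ :=
  Matrix.of fun p q =>
    mesProj n (p.1, p.2.1) (q.1, q.2.1) *
      mesProj n (p.2.2.1, p.2.2.2) (q.2.2.1, q.2.2.2)

/-- `I_C ⊗ M_{DA} ⊗ U_B` as an operator on C ⊗ D ⊗ A ⊗ B. -/
def opMid (n : ℕ) (M : Matrix (Fin n × Fin n) (Fin n × Fin n) ℂ)
    (U : Matrix (Fin n) (Fin n) ℂ) : Matrix (I4 n) (I4 n) ℂ :=
  Matrix.of fun p q =>
    (if p.1 = q.1 then 1 else 0) * M (p.2.1, p.2.2.1) (q.2.1, q.2.2.1) *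
      U p.2.2.2 q.2.2.2

/-- `I_C ⊗ I_{DA} ⊗ V_B` as an operator on C ⊗ D ⊗ A ⊗ B. -/
def opB (n : ℕ) (V : Matrix (Fin n) (Fin n) ℂ) : Matrix (I4 n) (I4 n) ℂ :=
  Matrix.of fun p q =>
    (if p.1 = q.1 ∧ p.2.1 = q.2.1 ∧ p.2.2.1 = q.2.2.1 then 1 else 0) *
      V p.2.2.2 q.2.2.2


/-- The entanglement fidelity
`F({Mᵢ, Uᵢ}) = Σᵢ tr[(ψ⁺_{CB} ⊗ I_{DA})(I_C ⊗ Mᵢ ⊗ Uᵢ)(ψ⁺_{CD} ⊗ ψ⁺_{AB})(I_C ⊗ I_{DA} ⊗ Uᵢ†)]`. -/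
def telFid (n k : ℕ) (M : Fin k → Matrix (Fin n × Fin n) (Fin n × Fin n) ℂ)
    (U : Fin k → Matrix (Fin n) (Fin n) ℂ) : ℂ :=
  ∑ i, Matrix.trace (psiCB n * opMid n (M i) (U i) * psiInit n * opB n (U i)ᴴ)

/-!
The summand of `telFid` for a pair `(M, U)` is `d⁻³ ⟨vec U| M |vec U⟩`. The vectorized Weyl
operators `vec (X^a Z^b) / √d` form an orthonormal basis of `ℂ^d ⊗ ℂ^d` (the generalized
Bell basis, up to transposition), so grouping their rank-one projectors along a map onto
`Fin k` gives a `k`-outcome POVM. If `U i` is the Weyl operator of a basis vector in the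
fibre over `i`, the summand is `d⁻³ · d = d⁻²`, and the fidelity is `k / d²`.
-/

theorem ofReal_sqrt_natCast_mul_self (n : ℕ) : (Real.sqrt n : ℂ) * Real.sqrt n = n := by
  rw [← Complex.ofReal_mul, Real.mul_self_sqrt (Nat.cast_nonneg n), Complex.ofReal_natCast]

section FiberProj

variable {𝕜 m n κ : Type*} [RCLike 𝕜] [Fintype n] [DecidableEq κ]

theorem sum_vecMulVec_col_star (V : Matrix m n 𝕜) :
    ∑ t, vecMulVec (Vᵀ t) (star (Vᵀ t)) = V * Vᴴ := by
  ext p q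
  simp [Matrix.sum_apply, mul_apply, vecMulVec_apply]

theorem star_col_dotProduct_col [DecidableEq n] {V : Matrix n n 𝕜}
    (hV : V ∈ unitaryGroup n 𝕜) (t s : n) :
    star (Vᵀ t) ⬝ᵥ Vᵀ s = if t = s then 1 else 0 := by
  rw [← one_apply, ← Unitary.star_mul_self_of_mem hV, mul_apply, dotProduct]
  rfl

def fiberProj (V : Matrix n n 𝕜) (f : n → κ) (i : κ) : Matrix n n 𝕜 :=
  ∑ t with f t = i, vecMulVec (Vᵀ t) (star (Vᵀ t))

theorem fiberProj_posSemidef (V : Matrix n n 𝕜) (f : n → κ) (i : κ) :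
    (fiberProj V f i).PosSemidef :=
  posSemidef_sum _ fun _ _ => posSemidef_vecMulVec_self_star _

variable [DecidableEq n] {V : Matrix n n 𝕜}

theorem sum_fiberProj [Fintype κ] (hV : V ∈ unitaryGroup n 𝕜) (f : n → κ) :
    ∑ i, fiberProj V f i = 1 := by
  simp only [fiberProj]
  rw [Finset.sum_fiberwise, sum_vecMulVec_col_star, ← star_eq_conjTranspose,
    Unitary.mul_star_self_of_mem hV]

theorem star_col_dotProduct_fiberProj_mulVec_col (hV : V ∈ unitaryGroup n 𝕜) (f : n → κ)
    (s : n) : star (Vᵀ s) ⬝ᵥ fiberProj V f (f s) *ᵥ Vᵀ s = 1 := by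
  simp only [fiberProj, sum_mulVec, dotProduct_sum, vecMulVec_mulVec]
  simp [star_col_dotProduct_col hV, apply_ite (star (Vᵀ s) ⬝ᵥ ·)]

end FiberProj

section Weyl

variable (d : ℕ) [NeZero d]

def zeta : ℂ := Complex.exp (2 * Real.pi * Complex.I / d)

theorem isPrimitiveRoot_zeta : IsPrimitiveRoot (zeta d) d :=
  Complex.isPrimitiveRoot_exp d (NeZero.ne d)

theorem star_zeta_pow_mul_self (m : ℕ) : star (zeta d ^ m) * zeta d ^ m = 1 := by
  rw [Complex.star_def, Complex.conj_mul', norm_pow, (isPrimitiveRoot_zeta d).norm'_eq_one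
    (NeZero.ne d)]
  simp

theorem sum_star_zeta_pow_mul_zeta_pow (b b' : Fin d) :
    ∑ j : Fin d, star (zeta d ^ ((b : ℕ) * j)) * zeta d ^ ((b' : ℕ) * j) =
      if b = b' then (d : ℂ) else 0 := by
  set η := star (zeta d ^ (b : ℕ)) * zeta d ^ (b' : ℕ)
  have hterm (j : ℕ) : star (zeta d ^ ((b : ℕ) * j)) * zeta d ^ ((b' : ℕ) * j) = η ^ j := by
    simp only [η, pow_mul, star_pow, mul_pow]
  simp only [hterm]
  rw [Fin.sum_univ_eq_sum_range (η ^ ·)]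
  split_ifs with h
  · simp only [η, h, star_zeta_pow_mul_self, one_pow, Finset.sum_const, Finset.card_range,
      nsmul_one]
  · have hη : η ≠ 1 := by
      intro hη
      refine h (Fin.ext ((isPrimitiveRoot_zeta d).pow_inj b.isLt b'.isLt ?_))
      calc zeta d ^ (b : ℕ) = zeta d ^ (b : ℕ) * η := by rw [hη, mul_one]
        _ = star (zeta d ^ (b : ℕ)) * zeta d ^ (b : ℕ) * zeta d ^ (b' : ℕ) := by ring
        _ = zeta d ^ (b' : ℕ) := by rw [star_zeta_pow_mul_self, one_mul]
    have hηd : η ^ d = 1 := by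
      rw [mul_pow, ← star_pow, pow_right_comm _ (b : ℕ), pow_right_comm _ (b' : ℕ),
        (isPrimitiveRoot_zeta d).pow_eq_one, one_pow, one_pow, star_one, mul_one]
    rw [geom_sum_eq hη, hηd, sub_self, zero_div]

/-- The generalized Pauli operator `X^a Z^b`, which maps `|j⟩` to `ζ^{bj} |j + a⟩`. -/
def weyl (a b : Fin d) : Matrix (Fin d) (Fin d) ℂ :=
  of fun i j => if i = j + a then zeta d ^ ((b : ℕ) * j) else 0

theorem weyl_mem_unitaryGroup (a b : Fin d) : weyl d a b ∈ unitaryGroup (Fin d) ℂ := by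
  rw [mem_unitaryGroup_iff']
  ext j j'
  simp only [mul_apply, star_apply, weyl, of_apply, apply_ite star, star_zero, ite_mul,
    mul_ite, zero_mul, mul_zero, Finset.sum_ite_eq', Finset.mem_univ, if_true, add_left_inj,
    one_apply]
  by_cases h : j = j'
  · rw [if_pos h.symm, if_pos h, h, star_zeta_pow_mul_self]
  · simp [h, Ne.symm h]

def weylFrame : Matrix (Fin d × Fin d) (Fin d × Fin d) ℂ :=
  of fun p s => weyl d s.1 s.2 p.1 p.2

theorem conjTranspose_weylFrame_mul_self : (weylFrame d)ᴴ * weylFrame d = (d : ℂ) • 1 := by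
  ext ⟨a, b⟩ ⟨a', b'⟩
  simp only [mul_apply, conjTranspose_apply, weylFrame, weyl, of_apply, Fintype.sum_prod_type,
    apply_ite star, star_zero, ite_mul, mul_ite, zero_mul, mul_zero]
  rw [Finset.sum_comm]
  simp only [Finset.sum_ite_eq', Finset.mem_univ, if_true, add_right_inj, Finset.sum_ite_irrel,
    Finset.sum_const_zero, sum_star_zeta_pow_mul_zeta_pow, Matrix.smul_apply, one_apply,
    Prod.mk.injEq, smul_eq_mul, mul_ite, mul_one, mul_zero]
  by_cases ha : a = a' <;> simp [ha, eq_comm]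

def weylBasis : Matrix (Fin d × Fin d) (Fin d × Fin d) ℂ :=
  ((Real.sqrt d : ℂ))⁻¹ • weylFrame d

theorem weylBasis_mem_unitaryGroup : weylBasis d ∈ unitaryGroup (Fin d × Fin d) ℂ := by
  have hd : (d : ℂ) ≠ 0 := NeZero.ne _
  rw [mem_unitaryGroup_iff', weylBasis, star_smul, smul_mul_smul_comm, star_eq_conjTranspose,
    conjTranspose_weylFrame_mul_self, smul_smul, star_inv₀, Complex.star_def,
    Complex.conj_ofReal, ← mul_inv, ofReal_sqrt_natCast_mul_self, inv_mul_cancel₀ hd, one_smul]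

end Weyl

theorem mesProj_apply (n : ℕ) (p q : Fin n × Fin n) :
    mesProj n p q = if p.1 = p.2 ∧ q.1 = q.2 then (n : ℂ)⁻¹ else 0 := by
  have h : (Real.sqrt n : ℂ)⁻¹ * (Real.sqrt n : ℂ)⁻¹ = (n : ℂ)⁻¹ := by
    rw [← mul_inv, ofReal_sqrt_natCast_mul_self]
  by_cases hp : p.1 = p.2 <;> by_cases hq : q.1 = q.2 <;> simp [mesProj, mes, hp, hq, h]

theorem trace_psiCB_mul_opMid_mul_psiInit_mul_opB (n : ℕ)
    (M : Matrix (Fin n × Fin n) (Fin n × Fin n) ℂ) (U : Matrix (Fin n) (Fin n) ℂ) :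
    trace (psiCB n * opMid n M U * psiInit n * opB n Uᴴ) =
      (n : ℂ)⁻¹ ^ 3 * (star (Function.uncurry U) ⬝ᵥ M *ᵥ Function.uncurry U) := by
  simp only [trace, diag, mul_apply, psiCB, opMid, psiInit, opB, mesProj_apply, of_apply,
    Fintype.sum_prod_type, ite_and, mul_ite, ite_mul, zero_mul, mul_zero, one_mul, mul_one,
    Finset.sum_ite_eq, Finset.sum_ite_eq', Finset.mem_univ, if_true, Finset.sum_ite_irrel,
    Finset.sum_const_zero, conjTranspose_apply, dotProduct, mulVec, Pi.star_apply, Finset.mul_sum]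
  simp only [Finset.sum_mul, Function.uncurry]
  refine Finset.sum_congr rfl fun _ _ => Finset.sum_congr rfl fun _ _ =>
    Finset.sum_congr rfl fun _ _ => Finset.sum_congr rfl fun _ _ => by ring

theorem trace_psiCB_mul_opMid_fiberProj_weyl (d : ℕ) [NeZero d] {κ : Type*} [DecidableEq κ]
    (f : Fin d × Fin d → κ) (s : Fin d × Fin d) :
    trace (psiCB d * opMid d (fiberProj (weylBasis d) f (f s)) (weyl d s.1 s.2) * psiInit d *
      opB d (weyl d s.1 s.2)ᴴ) = (d : ℂ)⁻¹ ^ 2 := by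
  have hd : (d : ℂ) ≠ 0 := NeZero.ne _
  have hsqrt : (Real.sqrt d : ℂ) ≠ 0 := by simp [NeZero.ne d]
  have hvec : Function.uncurry (weyl d s.1 s.2) = (Real.sqrt d : ℂ) • (weylBasis d)ᵀ s := by
    ext p
    simp [weylBasis, weylFrame, hsqrt, Function.uncurry]
  rw [trace_psiCB_mul_opMid_mul_psiInit_mul_opB, hvec, star_smul, mulVec_smul, smul_dotProduct,
    dotProduct_smul, star_col_dotProduct_fiberProj_mulVec_col (weylBasis_mem_unitaryGroup d),
    Complex.star_def, Complex.conj_ofReal, smul_eq_mul, smul_eq_mul, mul_one,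
    ofReal_sqrt_natCast_mul_self]
  field_simp

theorem constrained_teleportation_achievable_general (d k : ℕ) (hk1 : 1 ≤ k)
    (hk2 : k ≤ d ^ 2) :
    ∃ (M : Fin k → Matrix (Fin d × Fin d) (Fin d × Fin d) ℂ)
      (U : Fin k → Matrix (Fin d) (Fin d) ℂ),
      (∀ i, (M i).PosSemidef) ∧ (∑ i, M i = 1) ∧
      (∀ i, U i ∈ Matrix.unitaryGroup (Fin d) ℂ) ∧
      telFid d k M U = (k : ℂ) / (d : ℂ) ^ 2 := by
  have : NeZero d := ⟨by rintro rfl; simp at hk2; omega⟩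
  have : Nonempty (Fin k) := ⟨⟨0, hk1⟩⟩
  obtain ⟨e⟩ : Nonempty (Fin k ↪ Fin d × Fin d) :=
    Function.Embedding.nonempty_of_card_le (by simpa [sq] using hk2)
  have hfe : Function.LeftInverse (Function.invFun e) e := Function.leftInverse_invFun e.injective
  refine ⟨fiberProj (weylBasis d) (Function.invFun e), fun i => weyl d (e i).1 (e i).2,
    fiberProj_posSemidef _ _, sum_fiberProj (weylBasis_mem_unitaryGroup d) _,
    fun i => weyl_mem_unitaryGroup d _ _, ?_⟩
  have hterm (i : Fin k) :=
    hfe i ▸ trace_psiCB_mul_opMid_fiberProj_weyl d (Function.invFun e) (e i)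
  simp only [telFid, hterm, Finset.sum_const, Finset.card_univ, Fintype.card_fin, nsmul_eq_mul]
  ring

/-- There exist a `k`-element POVM on D ⊗ A and unitaries on B achieving
entanglement fidelity exactly `k/d²` in the constrained teleportation protocol. -/
theorem constrained_teleportation_achievable (d k : ℕ) (hd : 2 ≤ d) (hk1 : 1 ≤ k)
    (hk2 : k ≤ d ^ 2) :
    ∃ (M : Fin k → Matrix (Fin d × Fin d) (Fin d × Fin d) ℂ)
      (U : Fin k → Matrix (Fin d) (Fin d) ℂ),
      (∀ i, (M i).PosSemidef) ∧ (∑ i, M i = 1) ∧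
      (∀ i, U i ∈ Matrix.unitaryGroup (Fin d) ℂ) ∧
      telFid d k M U = (k : ℂ) / (d : ℂ) ^ 2 :=
  constrained_teleportation_achievable_general d k hk1 hk2
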